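/- arXiv:2001.08377 — 4 statements merged into one kernel-verified Lean document; each statement's English description precedes it below -/
import Mathlib

section
/- Let A be a coherent ring with the Artin–Rees property with respect to an ideal m, and let Â be the m-adic completion of A. Then the canonical map A → Â is flat, and for every finitely generated ideal a ⊂ A, the extension aÂ equals the completion â (in particular aÂ is closed in Â). -/
/-- A ring is coherent if every finitely generated ideal is finitely presented. -/
def IsCoherentRing (A : Type*) [CommRing A] : Prop :=
  ∀ I : Ideal A, I.FG → Module.FinitePresentation A I

/-- A ring `A` has the Artin–Rees property with respect to an ideal `m` if every finitely
generated submodule `F` of a finitely generated free `A`-module satisfies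
`mⁿE ∩ F = m^{n-c}(m^cE ∩ F)` for all `n > c`, for some `c`. -/
def HasArtinReesProperty (A : Type*) [CommRing A] (m : Ideal A) : Prop :=
  ∀ (r : ℕ) (F : Submodule A (Fin r → A)), F.FG →
    ∃ c : ℕ, ∀ n : ℕ, n > c →
      (m ^ n • ⊤ : Submodule A (Fin r → A)) ⊓ F = m ^ (n - c) • ((m ^ c • ⊤) ⊓ F)

/-!
The Artin–Rees property of `F ⊆ E` gives `Iⁿ⁺ᶜE ∩ F ⊆ IⁿF`: the `I`-adic topology of `E`
induces that of `F`, uniformly. For an injection `f : M → N` with this property, completion of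
`f` stays injective, and an `I`-adic Cauchy sequence in `N` whose `n`-th term lies in `f(M) + IⁿN` comes
from a Cauchy sequence in `M`; in particular completion is exact on `0 → M → N → P → 0`.

For a finitely generated ideal `a`, coherence gives a presentation `0 → K → Aʳ → a → 0` with `K`
finitely generated, so by the four lemma `Â ⊗ a → â` is injective; composing with the injection
`â → Â` shows that `Â ⊗ a → Â` is injective, i.e. `Â` is flat. An element of the closure of `aÂ`
is represented by a Cauchy sequence with `n`-th term in `a + Iⁿ`, hence lies in the image of `â`,
which is `aÂ` because `a` is finitely generated.
-/

section ArtinRees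

variable {R : Type*} [CommRing R] {I : Ideal R}
variable {M : Type*} [AddCommGroup M] [Module R M]
variable {N : Type*} [AddCommGroup N] [Module R N]

theorem inf_le_pow_smul_of_artinRees {F : Submodule R N} {c : ℕ}
    (hc : ∀ n > c, (I ^ n • ⊤ : Submodule R N) ⊓ F = I ^ (n - c) • ((I ^ c • ⊤) ⊓ F)) (n : ℕ) :
    (I ^ (n + c) • ⊤ : Submodule R N) ⊓ F ≤ I ^ n • F := by
  rcases Nat.eq_zero_or_pos n with rfl | hn
  · simp
  · rw [hc (n + c) (by omega), Nat.add_sub_cancel]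
    exact Submodule.smul_mono le_rfl inf_le_right

theorem comap_pow_smul_top_le_of_artinRees {f : M →ₗ[R] N} (hf : Function.Injective f) {c : ℕ}
    (hc : ∀ n > c, (I ^ n • ⊤ : Submodule R N) ⊓ LinearMap.range f =
      I ^ (n - c) • ((I ^ c • ⊤) ⊓ LinearMap.range f)) (n : ℕ) :
    (I ^ (n + c) • ⊤ : Submodule R N).comap f ≤ I ^ n • ⊤ := by
  intro x hx
  have := inf_le_pow_smul_of_artinRees hc n ⟨hx, x, rfl⟩
  rw [← Submodule.map_top, ← Submodule.map_smul''] at this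
  obtain ⟨y, hy, hyx⟩ := this
  rwa [← hf hyx]

end ArtinRees

namespace AdicCompletion

variable {R : Type*} [CommRing R] {I : Ideal R}
variable {M : Type*} [AddCommGroup M] [Module R M]
variable {N : Type*} [AddCommGroup N] [Module R N]

section ComapLE

variable {f : M →ₗ[R] N} {c : ℕ}
  (hc : ∀ n, (I ^ (n + c) • ⊤ : Submodule R N).comap f ≤ I ^ n • ⊤)
include hc

theorem map_injective_of_comap_le : Function.Injective (map I f) := by
  rw [← LinearMap.ker_eq_bot, LinearMap.ker_eq_bot']
  intro x
  induction x using induction_on with | h a => ?_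
  intro hx
  refine mk_zero_of _ _ _ ⟨0, fun n _ ↦ ⟨n + c, by omega, n, le_rfl, hc n ?_⟩⟩
  simpa using congrArg (fun x ↦ x.val (n + c)) hx

theorem mk_mem_range_map_of_comap_le (b : AdicCauchySequence I N)
    (hb : ∀ n, b n ∈ LinearMap.range f ⊔ I ^ n • ⊤) :
    mk I N b ∈ LinearMap.range (map I f) := by
  have hlift (n : ℕ) : ∃ y, f y - b n ∈ (I ^ n • ⊤ : Submodule R N) := by
    obtain ⟨_, ⟨y, rfl⟩, d, hd, hyd⟩ := Submodule.mem_sup.mp (hb n)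
    exact ⟨y, by rw [← hyd, sub_add_cancel_left]; exact neg_mem hd⟩
  -- Lifts chosen independently for each `n` become Cauchy once the index is shifted by `c`.
  choose y hy using hlift
  have hpow {m n : ℕ} (h : m ≤ n) : (I ^ n • ⊤ : Submodule R N) ≤ I ^ m • ⊤ :=
    Submodule.smul_mono_left (Ideal.pow_le_pow_right h)
  have hcauchy (n : ℕ) : y (n + c) ≡ y (n + 1 + c) [SMOD (I ^ n • ⊤ : Submodule R M)] := by
    rw [SModEq.sub_mem]
    apply hc n
    rw [Submodule.mem_comap, map_sub]
    have hb' : b (n + c) - b (n + 1 + c) ∈ (I ^ (n + c) • ⊤ : Submodule R N) :=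
      SModEq.sub_mem.mp (b.property (by omega))
    convert Submodule.add_mem _
      (Submodule.sub_mem _ (hy (n + c)) (hpow (by omega) (hy (n + 1 + c)))) hb' using 1
    abel
  refine ⟨mk I M (AdicCauchySequence.mk I M (fun n ↦ y (n + c)) hcauchy), ?_⟩
  ext n
  simp only [map_mk, mk_apply_coe, Submodule.mkQ_apply]
  rw [Submodule.Quotient.eq]
  change f (y (n + c)) - b n ∈ _
  convert Submodule.add_mem _ (hpow (by omega) (hy (n + c)))
    (SModEq.sub_mem.mp (b.property (show n ≤ n + c by omega)).symm) using 1
  abel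

theorem ker_map_le_range_map_of_comap_le {P : Type*} [AddCommGroup P] [Module R P]
    {g : N →ₗ[R] P} (hfg : Function.Exact f g) (hg : Function.Surjective g) :
    LinearMap.ker (map I g) ≤ LinearMap.range (map I f) := by
  intro x hx
  induction x using induction_on with | h b => ?_
  refine mk_mem_range_map_of_comap_le hc b fun n ↦ ?_
  have hgb : g (b n) ∈ (I ^ n • ⊤ : Submodule R N).map g := by
    rw [Submodule.map_smul'', Submodule.map_top, LinearMap.range_eq_top.mpr hg]
    simpa using congrArg (fun x ↦ x.val n) hx
  obtain ⟨d, hd, hgd⟩ := hgb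
  have : b n - d ∈ LinearMap.range f := (hfg _).mp (by rw [map_sub, hgd, sub_self])
  simpa using Submodule.add_mem_sup this hd

end ComapLE

theorem ofTensorProduct_injective_of_comap_le {ι : Type*} [Finite ι] {f : (ι → R) →ₗ[R] M}
    (hf : Function.Surjective f) (hK : (LinearMap.ker f).FG) {c : ℕ}
    (hc : ∀ n, (I ^ (n + c) • ⊤ : Submodule R (ι → R)).comap (LinearMap.ker f).subtype ≤
      I ^ n • ⊤) :
    Function.Injective (ofTensorProduct I M) := by
  have : Module.Finite R (LinearMap.ker f) := Module.Finite.iff_fg.mpr hK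
  have hexact : Function.Exact (map I (LinearMap.ker f).subtype) (map I f) :=
    LinearMap.exact_of_comp_eq_zero_of_ker_le_range
      (by rw [map_comp, f.exact_subtype_ker_map.linearMap_comp_eq_zero, map_zero])
      (by simpa using ker_map_le_range_map_of_comap_le hc f.exact_subtype_ker_map hf)
  exact LinearMap.injective_of_surjective_of_injective_of_right_exact
    (TensorProduct.AlgebraTensorModule.map LinearMap.id (LinearMap.ker f).subtype)
    (TensorProduct.AlgebraTensorModule.map LinearMap.id f)
    (map I (LinearMap.ker f).subtype) (map I f)
    (ofTensorProduct I _) (ofTensorProduct I _) (ofTensorProduct I M)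
    (ofTensorProduct_naturality I _) (ofTensorProduct_naturality I f)
    (lTensor_exact _ f.exact_subtype_ker_map hf) hexact
    (ofTensorProduct_surjective_of_finite I _)
    (ofTensorProduct_bijective_of_pi_of_fintype I ι).injective
    (LinearMap.lTensor_surjective _ hf)

theorem map_subtype_mem_map_algebraMap (a : Ideal R) [Module.Finite R a]
    (y : AdicCompletion I a) :
    map I a.subtype y ∈ a.map (algebraMap R (AdicCompletion I R)) := by
  obtain ⟨t, rfl⟩ := ofTensorProduct_surjective_of_finite I a y
  rw [← LinearMap.comp_apply, ofTensorProduct_naturality, LinearMap.comp_apply]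
  induction t using TensorProduct.induction_on with
  | zero => simp
  | tmul r x => exact Submodule.smul_mem _ r (Ideal.mem_map_of_mem _ x.2)
  | add u v hu hv => rw [map_add, map_add]; exact add_mem hu hv

theorem mem_sup_pow_of_mk_mem_sup_ker_evalₐ {a : Ideal R} {b : AdicCauchySequence I R} {n : ℕ}
    (h : mk I R b ∈ a.map (algebraMap R (AdicCompletion I R)) ⊔ RingHom.ker (evalₐ I n)) :
    b n ∈ a ⊔ I ^ n := by
  have h' := Ideal.mem_map_of_mem (evalₐ I n : AdicCompletion I R →+* R ⧸ I ^ n) h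
  rwa [Ideal.map_sup, (Ideal.map_eq_bot_iff_le_ker (I := RingHom.ker (evalₐ I n))
      (evalₐ I n : AdicCompletion I R →+* R ⧸ I ^ n)).mpr le_rfl, sup_bot_eq, Ideal.map_map,
    AlgHom.comp_algebraMap, Ideal.Quotient.algebraMap_eq, AlgHom.coe_toRingHom, evalₐ_mk,
    ← Ideal.mem_comap, Ideal.comap_map_of_surjective' _ Ideal.Quotient.mk_surjective,
    Ideal.mk_ker] at h'

end AdicCompletion

namespace HasArtinReesProperty

variable {R : Type*} [CommRing R] {I : Ideal R} (hAR : HasArtinReesProperty R I)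
include hAR

theorem exists_comap_le {M : Type*} [AddCommGroup M] [Module R M] {r : ℕ}
    {f : M →ₗ[R] (Fin r → R)} (hf : Function.Injective f) (hfg : (LinearMap.range f).FG) :
    ∃ c, ∀ n, (I ^ (n + c) • ⊤ : Submodule R (Fin r → R)).comap f ≤ I ^ n • ⊤ := by
  obtain ⟨c, hc⟩ := hAR r _ hfg
  exact ⟨c, comap_pow_smul_top_le_of_artinRees hf hc⟩

theorem exists_comap_subtype_le {a : Ideal R} (ha : a.FG) :
    ∃ c, ∀ n, (I ^ (n + c) • ⊤ : Submodule R R).comap a.subtype ≤ I ^ n • ⊤ := by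
  let e : (Fin 1 → R) ≃ₗ[R] R := LinearEquiv.funUnique (Fin 1) R R
  let f : a →ₗ[R] (Fin 1 → R) := e.symm.toLinearMap ∘ₗ a.subtype
  have hfg : (LinearMap.range f).FG := by
    rw [LinearMap.range_comp, Submodule.range_subtype]
    exact Submodule.FG.map _ ha
  have hf : Function.Injective f := e.symm.injective.comp a.injective_subtype
  obtain ⟨c, hc⟩ := hAR.exists_comap_le hf hfg
  refine ⟨c, fun n ↦ ?_⟩
  have hcomap (m : ℕ) :
      (I ^ m • ⊤ : Submodule R (Fin 1 → R)).comap e.symm.toLinearMap = I ^ m • ⊤ := by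
    rw [Submodule.comap_equiv_eq_map_symm, Submodule.map_smul'', Submodule.map_top,
      LinearEquiv.range]
  have := hc n
  rwa [Submodule.comap_comp, hcomap] at this

theorem flat_adicCompletion (hcoh : IsCoherentRing R) : Module.Flat R (AdicCompletion I R) := by
  rw [Module.Flat.iff_lTensor_injective]
  intro a ha
  have : Module.FinitePresentation R a := hcoh a ha
  obtain ⟨r, f, hf⟩ := Module.Finite.exists_fin' R a
  have hK : (LinearMap.ker f).FG := Module.FinitePresentation.fg_ker f hf
  obtain ⟨c, hc⟩ := hAR.exists_comap_le (LinearMap.ker f).injective_subtype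
    (by rwa [Submodule.range_subtype])
  obtain ⟨c', hc'⟩ := hAR.exists_comap_subtype_le ha
  have hinj : Function.Injective
      (AdicCompletion.map I a.subtype ∘ₗ AdicCompletion.ofTensorProduct I a) :=
    (AdicCompletion.map_injective_of_comap_le hc').comp
      (AdicCompletion.ofTensorProduct_injective_of_comap_le hf hK hc)
  rw [AdicCompletion.ofTensorProduct_naturality, LinearMap.coe_comp] at hinj
  exact hinj.of_comp

theorem map_algebraMap_eq_iInf_sup_ker_evalₐ {a : Ideal R} (ha : a.FG) :
    a.map (algebraMap R (AdicCompletion I R)) =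
      ⨅ n : ℕ, (a.map (algebraMap R (AdicCompletion I R)) ⊔
        RingHom.ker (AdicCompletion.evalₐ I n)) := by
  refine le_antisymm (le_iInf fun _ ↦ le_sup_left) fun x hx ↦ ?_
  have : Module.Finite R a := Module.Finite.iff_fg.mpr ha
  obtain ⟨c, hc⟩ := hAR.exists_comap_subtype_le ha
  induction x using AdicCompletion.induction_on with | h b => ?_
  obtain ⟨y, hy⟩ := AdicCompletion.mk_mem_range_map_of_comap_le hc b fun n ↦ by
    simpa using
      AdicCompletion.mem_sup_pow_of_mk_mem_sup_ker_evalₐ (Submodule.mem_iInf _ |>.mp hx n)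
  rw [← hy]
  exact AdicCompletion.map_subtype_mem_map_algebraMap a y

end HasArtinReesProperty

/-- Let `A` be a coherent ring with the Artin–Rees property with respect
to an ideal `m`, and `Â` the `m`-adic completion.  Then `A → Â` is flat, and for every
finitely generated ideal `a ⊆ A` the extension `aÂ` coincides with the topological closure
`â = ⋂ₙ (aÂ + ker(Â → A/mⁿ))` of `a` in `Â`; in particular `aÂ` is closed in `Â`. -/
theorem flat_completion_of_coherent_artinRees
    (A : Type*) [CommRing A] (m : Ideal A)
    (hcoh : IsCoherentRing A) (hAR : HasArtinReesProperty A m) :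
    Module.Flat A (AdicCompletion m A) ∧
      ∀ a : Ideal A, a.FG →
        a.map (algebraMap A (AdicCompletion m A)) =
          ⨅ n : ℕ, (a.map (algebraMap A (AdicCompletion m A)) ⊔
            RingHom.ker (AdicCompletion.evalₐ m n)) :=
  ⟨hAR.flat_adicCompletion hcoh, fun _ ha ↦ hAR.map_algebraMap_eq_iInf_sup_ker_evalₐ ha⟩
end

section
/- Let S be a Noetherian ring, n an ideal of S, I an arbitrary index set, P = S[x_i : i ∈ I] the polynomial ring, and m = (x_i : i ∈ I) + nP. Then P has the Artin–Rees property with respect to m: for every finitely generated submodule F of a finitely generated free P-module E, there exists c such that mⁿE ∩ F = m^{n−c}(m^cE ∩ F) for all n > c. -/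
universe u

open MvPolynomial

section ArtinRees

variable {A M : Type*} [CommRing A] [AddCommGroup M] [Module A M]

def IsArtinReesConstant (m : Ideal A) (F : Submodule A M) (c : ℕ) : Prop :=
  ∀ n > c, m ^ n • ⊤ ⊓ F = m ^ (n - c) • (m ^ c • ⊤ ⊓ F)

theorem isArtinReesConstant_of_le {m : Ideal A} {F : Submodule A M} {c : ℕ}
    (h : ∀ n > c, m ^ n • ⊤ ⊓ F ≤ m ^ (n - c) • (m ^ c • ⊤ ⊓ F)) :
    IsArtinReesConstant m F c := by
  refine fun n hn ↦ (h n hn).antisymm (le_inf ?_ (Submodule.smul_le_right.trans inf_le_right))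
  calc m ^ (n - c) • (m ^ c • ⊤ ⊓ F) ≤ m ^ (n - c) • m ^ c • (⊤ : Submodule A M) :=
        Submodule.smul_mono le_rfl inf_le_left
    _ = m ^ n • ⊤ := by
      rw [← Submodule.smul_assoc, smul_eq_mul, ← pow_add, Nat.sub_add_cancel hn.le]

theorem exists_isArtinReesConstant [IsNoetherianRing A] [Module.Finite A M] (m : Ideal A)
    (F : Submodule A M) : ∃ c, IsArtinReesConstant m F c :=
  let ⟨c, hc⟩ := m.exists_pow_inf_eq_pow_smul F
  ⟨c, fun n hn ↦ hc n hn.le⟩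

theorem Submodule.smul_mem_pow_add_smul {J : Ideal A} {a b : ℕ} {p : A} {y : M}
    {P : Submodule A M} (hp : p ∈ J ^ a) (hy : y ∈ J ^ b • P) : p • y ∈ J ^ (a + b) • P := by
  rw [pow_add, ← smul_eq_mul, Submodule.smul_assoc]
  exact Submodule.smul_mem_smul hp hy

variable {B N : Type*} [CommRing B] [AddCommGroup N] [Module B N] {σ : A →+* B}
  [RingHomSurjective σ]

theorem Submodule.map_ideal_smul (f : M →ₛₗ[σ] N) (I : Ideal A) (P : Submodule A M) :
    (I • P).map f = I.map σ • P.map f := by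
  refine le_antisymm (map_le_iff_le_comap.2 <| smul_le.2 fun a ha x hx ↦ ?_) (smul_le.2 ?_)
  · rw [mem_comap, f.map_smulₛₗ]
    exact smul_mem_smul (Ideal.mem_map_of_mem σ ha) (mem_map_of_mem hx)
  · rintro b hb _ ⟨x, hx, rfl⟩
    obtain ⟨a, ha, rfl⟩ := (Ideal.mem_map_iff_of_surjective σ σ.surjective).1 hb
    rw [← f.map_smulₛₗ]
    exact mem_map_of_mem (smul_mem_smul ha hx)

theorem isArtinReesConstant_map_iff {f : M →ₛₗ[σ] N} (hf : Function.Bijective f) {m : Ideal A}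
    {F : Submodule A M} {c : ℕ} :
    IsArtinReesConstant (m.map σ) (F.map f) c ↔ IsArtinReesConstant m F c := by
  have hmap (k : ℕ) (G : Submodule A M) :
      (m ^ k • ⊤ ⊓ G).map f = m.map σ ^ k • ⊤ ⊓ G.map f := by
    rw [Submodule.map_inf _ hf.1, Submodule.map_ideal_smul, Submodule.map_top,
      LinearMap.range_eq_top.2 hf.2, Ideal.map_pow]
  refine forall₂_congr fun n _ ↦ ?_
  rw [← (Submodule.map_injective_of_injective hf.1).eq_iff, hmap, Submodule.map_ideal_smul, hmap,
    Ideal.map_pow]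

end ArtinRees

theorem Submodule.mem_ideal_smul_top_pi_iff {R ι : Type*} [CommRing R] [Finite ι] {I : Ideal R}
    {x : ι → R} : x ∈ (I • ⊤ : Submodule R (ι → R)) ↔ ∀ i, x i ∈ I := by
  classical
  have := Fintype.ofFinite ι
  refine ⟨fun hx ↦ ?_, fun hx ↦ ?_⟩
  · refine Submodule.smul_induction_on hx (fun a ha y _ i ↦ ?_) fun y z hy hz i ↦ ?_
    · exact I.mul_mem_right _ ha
    · exact I.add_mem (hy i) (hz i)
  · rw [pi_eq_sum_univ x]
    exact Submodule.sum_mem _ fun i _ ↦ Submodule.smul_mem_smul (hx i) Submodule.mem_top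

def RingHom.compLeftₛₗ {A B : Type*} [CommRing A] [CommRing B] (σ : A →+* B) (ι : Type*) :
    (ι → A) →ₛₗ[σ] (ι → B) where
  __ := σ.compLeft ι
  map_smul' a x := map_mul (σ.compLeft ι) (fun _ ↦ a) x

namespace MvPolynomial

variable {R σ : Type*} [CommRing R] {m₀ : Ideal R}

theorem idealOfVars_sup_map_C (m₀ : Ideal R) :
    idealOfVars σ R ⊔ m₀.map C = m₀.comap constantCoeff := by
  refine le_antisymm (sup_le ?_ ?_) fun p hp ↦ ?_
  · rw [idealOfVars, Ideal.span_le]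
    rintro _ ⟨i, rfl⟩
    simp
  · rw [Ideal.map_le_iff_le_comap, Ideal.comap_comap, constantCoeff_comp_C, Ideal.comap_id]
  · have hX : p - C (constantCoeff p) ∈ idealOfVars σ R := by
      rw [← pow_one (idealOfVars σ R), mem_pow_idealOfVars_iff']
      intro d hd
      rw [Nat.lt_one_iff, Finsupp.degree_eq_zero_iff] at hd
      simp [hd, constantCoeff_eq]
    rw [← sub_add_cancel p (C (constantCoeff p))]
    exact Submodule.add_mem_sup hX (Ideal.mem_map_of_mem C hp)

theorem C_mem_comap_constantCoeff_pow {a : R} {k : ℕ} (ha : a ∈ m₀ ^ k) :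
    C a ∈ m₀.comap (constantCoeff : MvPolynomial σ R →+* R) ^ k := by
  refine Ideal.pow_right_mono ((idealOfVars_sup_map_C m₀).symm ▸ le_sup_right) k ?_
  rw [← Ideal.map_pow]
  exact Ideal.mem_map_of_mem C ha

theorem monomial_one_mem_comap_constantCoeff_pow (d : σ →₀ ℕ) :
    monomial d 1 ∈ m₀.comap (constantCoeff : MvPolynomial σ R →+* R) ^ d.degree := by
  refine Ideal.pow_right_mono ((idealOfVars_sup_map_C m₀).symm ▸ le_sup_left) _ ?_
  rw [mem_pow_idealOfVars_iff]
  intro e he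
  rw [Finset.mem_singleton.1 (support_monomial_subset he)]

theorem mem_comap_constantCoeff_pow_iff {k : ℕ} {p : MvPolynomial σ R} :
    p ∈ m₀.comap constantCoeff ^ k ↔ ∀ d, coeff d p ∈ m₀ ^ (k - d.degree) := by
  classical
  refine ⟨fun hp ↦ ?_, fun hp ↦ ?_⟩
  · induction k generalizing p with
    | zero => simp
    | succ k ih =>
      rw [pow_succ'] at hp
      refine Submodule.mul_induction_on hp (fun a ha b hb d ↦ ?_) fun x y hx hy d ↦ ?_
      · rw [coeff_mul]
        refine Ideal.sum_mem _ fun de hde ↦ ?_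
        rw [Finset.HasAntidiagonal.mem_antidiagonal] at hde
        have hdeg : de.1.degree + de.2.degree = d.degree := by rw [← map_add, hde]
        -- `a ∈ m` has its constant term in `m₀`; its other terms raise the degree
        rcases eq_or_ne de.1 0 with h0 | h0
        · refine Ideal.pow_le_pow_right (by omega)
            (pow_succ' m₀ _ ▸ Ideal.mul_mem_mul ?_ (ih hb _))
          simpa [h0, constantCoeff_eq] using ha
        · have hd₁ := (Finsupp.degree_eq_zero_iff de.1).not.2 h0
          exact Ideal.pow_le_pow_right (by omega) (Ideal.mul_mem_left _ _ (ih hb de.2))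
      · rw [coeff_add]
        exact Ideal.add_mem _ (hx d) (hy d)
  · rw [as_sum p]
    refine Ideal.sum_mem _ fun d _ ↦ ?_
    rw [← mul_one (coeff d p), ← smul_eq_mul, ← smul_monomial, smul_eq_C_mul, mul_comm]
    refine Ideal.pow_le_pow_right (le_add_tsub : k ≤ d.degree + (k - d.degree)) ?_
    rw [pow_add]
    exact Ideal.mul_mem_mul (monomial_one_mem_comap_constantCoeff_pow d)
      (C_mem_comap_constantCoeff_pow (hp d))

variable (σ) {ι : Type*}

noncomputable def constVec : (ι → R) →ₗ[R] (ι → MvPolynomial σ R) :=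
  (Algebra.linearMap R (MvPolynomial σ R)).compLeft ι

variable {σ} in
noncomputable def coeffVec (d : σ →₀ ℕ) : (ι → MvPolynomial σ R) →ₗ[R] (ι → R) :=
  (lcoeff R d).compLeft ι

noncomputable def extendSubmodule (F₀ : Submodule R (ι → R)) :
    Submodule (MvPolynomial σ R) (ι → MvPolynomial σ R) :=
  Submodule.span (MvPolynomial σ R) (constVec σ '' F₀)

variable {σ}

@[simp]
theorem constVec_apply (v : ι → R) (i : ι) : constVec σ v i = C (v i) := rfl

@[simp]
theorem coeffVec_apply (d : σ →₀ ℕ) (x : ι → MvPolynomial σ R) (i : ι) :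
    coeffVec d x i = coeff d (x i) := rfl

theorem constVec_mem_smul {I : Ideal R} {J : Ideal (MvPolynomial σ R)} (hIJ : ∀ a ∈ I, C a ∈ J)
    {P₀ : Submodule R (ι → R)} {P : Submodule (MvPolynomial σ R) (ι → MvPolynomial σ R)}
    (hP : ∀ v ∈ P₀, constVec σ v ∈ P) {v : ι → R} (hv : v ∈ I • P₀) :
    constVec σ v ∈ J • P := by
  refine Submodule.smul_induction_on hv (fun a ha w hw ↦ ?_) fun w w' hw hw' ↦ ?_
  · have : constVec σ (a • w) = (C a : MvPolynomial σ R) • constVec σ w := by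
      ext i : 1
      simp
    exact this ▸ Submodule.smul_mem_smul (hIJ a ha) (hP w hw)
  · exact (map_add (constVec σ) w w').symm ▸ Submodule.add_mem _ hw hw'

theorem mem_of_forall_monomial_smul_mem [Finite ι]
    {N : Submodule (MvPolynomial σ R) (ι → MvPolynomial σ R)} {x : ι → MvPolynomial σ R}
    (h : ∀ d, (monomial d 1 : MvPolynomial σ R) • constVec σ (coeffVec d x) ∈ N) : x ∈ N := by
  classical
  have := Fintype.ofFinite ι
  suffices x = ∑ d ∈ Finset.univ.biUnion fun i ↦ (x i).support,
      (monomial d 1 : MvPolynomial σ R) • constVec σ (coeffVec d x) from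
    this ▸ Submodule.sum_mem _ fun d _ ↦ h d
  ext i : 1
  simp only [Finset.sum_apply, Pi.smul_apply, constVec_apply, coeffVec_apply, smul_eq_mul]
  simp_rw [mul_comm _ (C _), C_mul_monomial, mul_one]
  refine (as_sum (x i)).trans (Finset.sum_subset (Finset.subset_biUnion_of_mem
    (fun j ↦ (x j).support) (Finset.mem_univ i)) fun d _ hd ↦ ?_)
  rw [notMem_support_iff.1 hd, monomial_zero]

theorem extendSubmodule_span (V : Set (ι → R)) :
    extendSubmodule σ (Submodule.span R V) =
      Submodule.span (MvPolynomial σ R) (constVec σ '' V) := by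
  rw [extendSubmodule, ← Submodule.map_coe, Submodule.map_span, Submodule.span_span_of_tower]

theorem constVec_mem_pow_smul_top {k : ℕ} {v : ι → R}
    (hv : v ∈ (m₀ ^ k • ⊤ : Submodule R (ι → R))) :
    constVec σ v ∈ (m₀.comap (constantCoeff : MvPolynomial σ R →+* R) ^ k • ⊤ :
      Submodule (MvPolynomial σ R) (ι → MvPolynomial σ R)) :=
  constVec_mem_smul (fun _ ↦ C_mem_comap_constantCoeff_pow) (fun _ _ ↦ Submodule.mem_top) hv

variable [Finite ι]

theorem mem_comap_constantCoeff_pow_smul_top_iff {k : ℕ} {x : ι → MvPolynomial σ R} :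
    x ∈ (m₀.comap (constantCoeff : MvPolynomial σ R →+* R) ^ k • ⊤ :
        Submodule (MvPolynomial σ R) (ι → MvPolynomial σ R)) ↔
      ∀ d, coeffVec d x ∈ (m₀ ^ (k - d.degree) • ⊤ : Submodule R (ι → R)) := by
  simp only [Submodule.mem_ideal_smul_top_pi_iff, mem_comap_constantCoeff_pow_iff, coeffVec_apply]
  exact forall_comm

theorem mem_extendSubmodule_iff {F₀ : Submodule R (ι → R)} {x : ι → MvPolynomial σ R} :
    x ∈ extendSubmodule σ F₀ ↔ ∀ d, coeffVec d x ∈ F₀ := by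
  classical
  refine ⟨fun hx ↦ ?_, fun h ↦ mem_of_forall_monomial_smul_mem fun d ↦
    Submodule.smul_mem _ _ (Submodule.subset_span ⟨_, h d, rfl⟩)⟩
  induction hx using Submodule.span_induction with
  | mem y hy =>
    obtain ⟨v, hv, rfl⟩ := hy
    intro d
    by_cases hd : d = 0
    · have : coeffVec d (constVec σ v) = v := by ext i; simp [hd]
      rwa [this]
    · have : coeffVec d (constVec σ v) = 0 := by ext i; simp [coeff_C, Ne.symm hd]
      rw [this]
      exact F₀.zero_mem
  | zero => simp
  | add y z _ _ hy hz => simpa using fun d ↦ F₀.add_mem (hy d) (hz d)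
  | smul p y _ hy =>
    intro d
    have : coeffVec d (p • y) =
        ∑ de ∈ Finset.HasAntidiagonal.antidiagonal d, coeff de.1 p • coeffVec de.2 y := by
      ext i
      simp [coeff_mul, Finset.sum_apply]
    exact this ▸ F₀.sum_mem fun de _ ↦ F₀.smul_mem _ (hy de.2)

theorem isArtinReesConstant_extendSubmodule {F₀ : Submodule R (ι → R)} {c : ℕ}
    (h : IsArtinReesConstant m₀ F₀ c) :
    IsArtinReesConstant (m₀.comap (constantCoeff : MvPolynomial σ R →+* R))
      (extendSubmodule σ F₀) c := by
  have hconst : ∀ v ∈ m₀ ^ c • ⊤ ⊓ F₀,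
      constVec σ v ∈ m₀.comap constantCoeff ^ c • ⊤ ⊓ extendSubmodule σ F₀ := fun v hv ↦
    ⟨constVec_mem_pow_smul_top hv.1, Submodule.subset_span ⟨v, hv.2, rfl⟩⟩
  refine isArtinReesConstant_of_le fun n hn x hx ↦ mem_of_forall_monomial_smul_mem fun d ↦ ?_
  have hxm := mem_comap_constantCoeff_pow_smul_top_iff.1 hx.1 d
  have hxF := mem_extendSubmodule_iff.1 hx.2 d
  rcases lt_or_ge d.degree (n - c) with hd | hd
  · -- Artin–Rees over `R`, applied to the coefficient vector at `X^d`
    have hv : coeffVec d x ∈ m₀ ^ (n - d.degree - c) • (m₀ ^ c • ⊤ ⊓ F₀) :=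
      h (n - d.degree) (by omega) ▸ ⟨hxm, hxF⟩
    have := Submodule.smul_mem_pow_add_smul (monomial_one_mem_comap_constantCoeff_pow d)
      (constVec_mem_smul (fun _ ↦ C_mem_comap_constantCoeff_pow) hconst hv)
    rwa [show d.degree + (n - d.degree - c) = n - c by omega] at this
  · -- `X^d` is itself a multiple of a monomial of degree `n - c`
    obtain ⟨d₁, hd₁, hdeg₁⟩ := d.exists_le_degree_eq (n - c) hd
    have hdeg : d₁.degree + (d - d₁).degree = d.degree := by
      rw [← map_add, add_tsub_cancel_of_le hd₁]
    have hsplit : (monomial d 1 : MvPolynomial σ R) = monomial d₁ 1 * monomial (d - d₁) 1 := by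
      rw [monomial_mul, one_mul, add_tsub_cancel_of_le hd₁]
    rw [hsplit, mul_smul]
    refine Submodule.smul_mem_smul (hdeg₁ ▸ monomial_one_mem_comap_constantCoeff_pow d₁) ⟨?_, ?_⟩
    · exact Submodule.smul_mono_left (Ideal.pow_le_pow_right (by omega))
        (Submodule.smul_mem_pow_add_smul (monomial_one_mem_comap_constantCoeff_pow _)
          (constVec_mem_pow_smul_top hxm))
    · exact Submodule.smul_mem _ _ (Submodule.subset_span ⟨_, hxF, rfl⟩)

theorem exists_ringEquiv_iter_forall_mem_range_C {I : Type u}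
    {s : Set (MvPolynomial I R)} (hs : s.Finite) :
    ∃ (σ τ : Type u) (_ : Finite τ) (e : MvPolynomial I R ≃+* MvPolynomial σ (MvPolynomial τ R)),
      (constantCoeff.comp constantCoeff).comp e.toRingHom = constantCoeff ∧
        ∀ p ∈ s, e p ∈ Set.range C := by
  classical
  let J : Set I := ⋃ p ∈ s, p.vars
  obtain ⟨eqv, heqv⟩ : ∃ eqv : I ≃ ↥Jᶜ ⊕ J, eqv ∘ (↑) = Sum.inr :=
    ⟨(Equiv.Set.sumCompl J).symm.trans (Equiv.sumComm _ _),
      by ext j; simp [Equiv.Set.sumCompl_symm_apply]⟩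
  refine ⟨_, _, (hs.biUnion fun p _ ↦ p.vars.finite_toSet).to_subtype,
    ((renameEquiv R eqv).trans (sumAlgEquiv R _ _)).toRingEquiv, ?_, fun p hp ↦ ?_⟩
  · refine ringHom_ext (fun a ↦ by simp) fun i ↦ ?_
    rcases h : eqv i with j | j <;> simp [h]
  · obtain ⟨q, rfl⟩ := exists_rename_eq_of_vars_subset_range p ((↑) : J → I)
      Subtype.val_injective
      (Subtype.range_coe ▸ Set.subset_biUnion_of_mem (u := fun p ↦ (p.vars : Set I)) hp)
    refine ⟨q, ?_⟩
    simpa [rename_rename, heqv] using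
      (DFunLike.congr_fun (sumAlgEquiv_comp_rename_inr R _ _) q).symm

end MvPolynomial

/-- Let `S` be a Noetherian ring, `n` an ideal of `S`, `I` an arbitrary
index set, `P = S[xᵢ : i ∈ I]`, and `m = (xᵢ : i ∈ I) + nP`. Then `P` has the Artin–Rees
property with respect to `m`. -/
theorem mvPolynomial_hasArtinReesProperty
    (S : Type*) [CommRing S] [IsNoetherianRing S] (n : Ideal S) (I : Type*) :
    HasArtinReesProperty (MvPolynomial I S)
      (Ideal.span (Set.range MvPolynomial.X) ⊔
        n.map (MvPolynomial.C : S →+* MvPolynomial I S)) := by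
  rw [← idealOfVars, idealOfVars_sup_map_C]
  rintro r F ⟨T, rfl⟩
  obtain ⟨σ, τ, _, e, he, hC⟩ := exists_ringEquiv_iter_forall_mem_range_C
    (T.finite_toSet.biUnion fun g _ ↦ Set.finite_range g)
  have : RingHomSurjective e.toRingHom := ⟨e.surjective⟩
  let f := e.toRingHom.compLeftₛₗ (Fin r)
  have hf : Function.Bijective f := (Equiv.piCongrRight fun _ ↦ e.toEquiv).bijective
  have hT : f '' T ⊆ Set.range (constVec σ) := by
    rintro _ ⟨g, hg, rfl⟩
    choose q hq using fun i ↦ hC (g i) (Set.mem_biUnion hg (Set.mem_range_self i))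
    exact ⟨q, funext hq⟩
  obtain ⟨c, hc⟩ := exists_isArtinReesConstant (n.comap (constantCoeff : MvPolynomial τ S →+* S))
    (Submodule.span _ (constVec σ ⁻¹' (f '' T)))
  refine ⟨c, (isArtinReesConstant_map_iff hf).1 ?_⟩
  rw [Submodule.map_span, ← Set.image_preimage_eq_of_subset hT, ← extendSubmodule_span, ← he,
    ← Ideal.comap_comap, Ideal.map_comap_of_surjective e.toRingHom e.surjective,
    ← Ideal.comap_comap]
  exact isArtinReesConstant_extendSubmodule hc
end

section
/- Let P = k[x_i : i ∈ I] be a polynomial ring over a field in arbitrarily many variables. Every prime ideal of P of finite height is finitely generated. -/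
/-!
For a finite set `s` of variables, the ideal `pₛ` generated by `p ∩ k[xᵢ : i ∈ s]` is finitely
generated (Hilbert's basis theorem), contained in `p`, and prime, since it is the extension of a
prime of `k[xᵢ : i ∈ s]` to a polynomial ring over it. Every element of `p` lies in some `pₛ`, so if
`p` is not finitely generated, every `pₛ` is strictly below `p` and strictly below some larger
`pₜ`. This produces chains of primes of any length below `p`, so `p` has infinite height.
-/

noncomputable def idealHeight {R : Type*} [CommRing R] (I : Ideal R) : ℕ∞ :=
  ⨅ p : {p : PrimeSpectrum R // I ≤ p.asIdeal}, Order.height p.1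

theorem Order.height_eq_top_of_forall_exists_lt {α ι : Type*} [Preorder α] [Nonempty ι]
    {f : ι → α} {x : α} (hf : ∀ i, ∃ j, f i < f j) (hx : ∀ i, f i < x) : height x = ⊤ := by
  have h : ∀ n : ℕ, ∃ i, (n : ℕ∞) ≤ height (f i) := by
    intro n
    induction n with
    | zero => exact ⟨Classical.arbitrary ι, by simp⟩
    | succ n ih =>
      obtain ⟨i, hi⟩ := ih
      obtain ⟨j, hij⟩ := hf i
      exact ⟨j, by push_cast; exact (add_le_add_left hi 1).trans (height_add_one_le hij)⟩
  refine ENat.eq_top_iff_forall_ge.2 fun n => ?_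
  obtain ⟨i, hi⟩ := h n
  exact hi.trans (height_mono (hx i).le)

theorem idealHeight_eq_height {R : Type*} [CommRing R] (p : PrimeSpectrum R) :
    idealHeight p.asIdeal = Order.height p :=
  le_antisymm (iInf_le_of_le ⟨p, le_rfl⟩ le_rfl) (le_iInf fun q => Order.height_mono q.2)

namespace MvPolynomial

variable {R σ : Type*} [CommRing R]

theorem isPrime_map_C {q : Ideal R} [q.IsPrime] :
    (q.map (C : R →+* MvPolynomial σ R)).IsPrime := by
  rw [← Ideal.Quotient.isDomain_iff_prime]
  exact MulEquiv.isDomain _ (quotientEquivQuotientMvPolynomial (σ := σ) q).symm.toMulEquiv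

theorem exists_ringEquiv_comp_rename_val_eq_C (s : Set σ) :
    ∃ e : MvPolynomial σ R ≃+* MvPolynomial ↥sᶜ (MvPolynomial s R),
      e.toRingHom.comp (rename (R := R) ((↑) : s → σ)).toRingHom = C := by
  classical
  refine ⟨((renameEquiv R ((Equiv.sumComm _ _).trans (Equiv.sumCompl (· ∈ s)))).symm.trans
    (sumAlgEquiv R _ _)).toRingEquiv, ringHom_ext (fun r => ?_) (fun i => ?_)⟩
  · simp
  · simp [Equiv.sumCompl_symm_apply_of_pos (p := (· ∈ s)) i.2]

theorem isPrime_map_rename_val (s : Set σ) {q : Ideal (MvPolynomial s R)} [q.IsPrime] :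
    (q.map (rename ((↑) : s → σ))).IsPrime := by
  obtain ⟨e, he⟩ := exists_ringEquiv_comp_rename_val_eq_C (R := R) s
  have hrename : (rename (R := R) ((↑) : s → σ)).toRingHom = e.symm.toRingHom.comp C := by
    rw [← he, ← RingHom.comp_assoc, RingEquiv.symm_toRingHom_comp_toRingHom, RingHom.id_comp]
  have := isPrime_map_C (σ := ↥sᶜ) (q := q)
  change (q.map (rename (R := R) ((↑) : s → σ)).toRingHom).IsPrime
  rw [hrename, ← Ideal.map_map]
  exact Ideal.map_isPrime_of_equiv e.symm

/-- The ideal generated by `p ∩ R[xᵢ : i ∈ s]`. -/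
noncomputable def extendedContraction (s : Set σ) (p : Ideal (MvPolynomial σ R)) :
    Ideal (MvPolynomial σ R) :=
  (p.comap (rename ((↑) : s → σ))).map (rename ((↑) : s → σ))

variable {p : Ideal (MvPolynomial σ R)}

theorem extendedContraction_le (s : Set σ) : extendedContraction s p ≤ p :=
  Ideal.map_comap_le

theorem mem_extendedContraction {s : Set σ} {f : MvPolynomial σ R} (hfp : f ∈ p)
    (hfs : f ∈ supported R s) : f ∈ extendedContraction s p := by
  rw [supported_eq_range_rename] at hfs
  obtain ⟨g, rfl⟩ := hfs
  exact Ideal.mem_map_of_mem _ hfp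

theorem extendedContraction_mono {s t : Set σ} (hst : s ⊆ t) :
    extendedContraction s p ≤ extendedContraction t p :=
  Ideal.map_le_iff_le_comap.2 fun g hg =>
    mem_extendedContraction hg (supported_mono hst ((supported_eq_range_rename s).ge ⟨g, rfl⟩))

theorem isPrime_extendedContraction [p.IsPrime] (s : Set σ) :
    (extendedContraction s p).IsPrime :=
  isPrime_map_rename_val s

theorem fg_extendedContraction [IsNoetherianRing R] (s : Set σ) [Finite s] :
    (extendedContraction s p).FG :=
  Ideal.FG.map (IsNoetherian.noetherian _) _

theorem extendedContraction_lt [IsNoetherianRing R] (hp : ¬ p.FG) (s : Set σ) [Finite s] :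
    extendedContraction s p < p :=
  (extendedContraction_le s).lt_of_ne fun h => hp (h ▸ fg_extendedContraction s)

theorem exists_extendedContraction_lt [IsNoetherianRing R] (hp : ¬ p.FG) (s : Finset σ) :
    ∃ t : Finset σ, extendedContraction s p < extendedContraction t p := by
  classical
  obtain ⟨f, hfp, hfs⟩ := SetLike.exists_of_lt (extendedContraction_lt hp s)
  refine ⟨s ∪ f.vars, (extendedContraction_mono ?_).lt_of_not_ge fun h => hfs (h ?_)⟩
  · simp
  · exact mem_extendedContraction hfp (supported_mono (by simp) (mem_supported_vars f))

theorem height_eq_top_of_not_fg [IsNoetherianRing R] (x : PrimeSpectrum (MvPolynomial σ R))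
    (hx : ¬ x.asIdeal.FG) : Order.height x = ⊤ := by
  have := x.isPrime
  let y (s : Finset σ) : PrimeSpectrum (MvPolynomial σ R) :=
    ⟨extendedContraction s x.asIdeal, isPrime_extendedContraction _⟩
  exact Order.height_eq_top_of_forall_exists_lt (f := y)
    (fun s => exists_extendedContraction_lt hx s) (fun s => extendedContraction_lt hx s)

end MvPolynomial

/-- In a polynomial ring `P = k[xᵢ : i ∈ I]` over a field in arbitrarily
many variables, every prime ideal of finite height is finitely generated. -/
theorem prime_of_finite_height_fg
    (k : Type) [Field k] (I : Type) (p : Ideal (MvPolynomial I k))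
    (hp : p.IsPrime) (hht : idealHeight p < ⊤) : p.FG := by
  by_contra hfg
  have hheight : idealHeight p = Order.height (⟨p, hp⟩ : PrimeSpectrum (MvPolynomial I k)) :=
    idealHeight_eq_height ⟨p, hp⟩
  rw [hheight, MvPolynomial.height_eq_top_of_not_fg _ hfg] at hht
  exact hht.false
end

section
/- Let P̂ = S[[x_i : i ∈ I]] be the power series ring over a ring S (the completion of S[x_i : i ∈ I] at (x_i)), and let a ⊆ P̂ be an ideal whose initial ideal in(a) ⊆ S[x_i : i ∈ I] is finitely generated. Then a is finitely generated and closed in P̂ (equal to its topological closure ∩_n (a + ker(P̂ → S[x_i]/( x_i)ⁿ))). -/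
variable (k : Type*) [CommRing k] (ι : Type*)

/-- The maximal graded ideal `(xᵢ : i ∈ I)` of the polynomial ring. -/
noncomputable def mxIdeal : Ideal (MvPolynomial ι k) :=
  Ideal.span (Set.range (MvPolynomial.X : ι → MvPolynomial ι k))

/-- The power series ring `k[[xᵢ : i ∈ I]]`, defined as the completion of the polynomial
ring `k[xᵢ : i ∈ I]` at the ideal `(xᵢ : i ∈ I)`. -/
noncomputable abbrev PowerSeriesRing : Type _ :=
  AdicCompletion (mxIdeal k ι) (MvPolynomial ι k)

/-- The degree-`d` homogeneous component of an element of `k[[xᵢ : i ∈ I]]`, computed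
from its residue modulo `(xᵢ)^{d+1}` under the identification `gr ≅ k[xᵢ : i ∈ I]`. -/
noncomputable def component (d : ℕ) (f : PowerSeriesRing k ι) : MvPolynomial ι k :=
  MvPolynomial.homogeneousComponent d
    (Quotient.out (AdicCompletion.eval (mxIdeal k ι) (MvPolynomial ι k) (d + 1) f))

/-- The order of a power series: the least degree in which it has a nonzero component. -/
noncomputable def ordOf (f : PowerSeriesRing k ι) : ℕ :=
  sInf {d : ℕ | component k ι d f ≠ 0}

/-- The initial form `in(f)` of a power series: its lowest-degree nonzero homogeneous
component, viewed in `k[xᵢ : i ∈ I]`. -/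
noncomputable def initialForm (f : PowerSeriesRing k ι) : MvPolynomial ι k :=
  component k ι (ordOf k ι f) f

/-- The initial ideal `in(a) ⊆ k[xᵢ : i ∈ I]` of an ideal `a ⊆ k[[xᵢ : i ∈ I]]`: the ideal
generated by the initial forms of the nonzero elements of `a`. -/
noncomputable def initialIdeal (a : Ideal (PowerSeriesRing k ι)) : Ideal (MvPolynomial ι k) :=
  Ideal.span {g : MvPolynomial ι k | ∃ f ∈ a, f ≠ 0 ∧ g = initialForm k ι f}

/-!
Choose `f₁, …, f_r ∈ a` whose initial forms generate `in(a)`. If `f` lies in the closure of `a`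
and has order `n`, then `f` agrees modulo `(xᵢ)^{n+1}` with some `y ∈ a` of the same order, so the
degree-`n` component of `f` is `in(y) ∈ in(a)` and equals `∑ hᵢ in(fᵢ)` with `hᵢ` homogeneous of
degree `n - ord fᵢ`. Subtracting `∑ hᵢ fᵢ` raises the order of `f`; iterating, the accumulated
coefficients of each `fᵢ` form an `(xᵢ)`-adic Cauchy sequence, and their limits `Qᵢ` satisfy
`f = ∑ Qᵢ fᵢ`. Hence the closure of `a` lies in `(f₁, …, f_r) ⊆ a`.
-/

section
variable {k ι}

namespace MvPolynomial

theorem mem_mxIdeal_pow_iff {p : MvPolynomial ι k} {n : ℕ} :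
    p ∈ mxIdeal k ι ^ n ↔ ∀ d < n, homogeneousComponent d p = 0 := by
  refine (mem_pow_idealOfVars_iff' n p).trans ⟨fun h d hd => ?_, fun h x hx => ?_⟩
  · ext x
    rw [coeff_homogeneousComponent, coeff_zero]
    split_ifs with hx
    · exact h x (hx ▸ hd)
    · rfl
  · simpa [coeff_homogeneousComponent] using congr_arg (coeff x) (h _ hx)

theorem IsHomogeneous.mem_mxIdeal_pow {p : MvPolynomial ι k} {d : ℕ} (hp : p.IsHomogeneous d) :
    p ∈ mxIdeal k ι ^ d :=
  mem_mxIdeal_pow_iff.mpr fun e he => by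
    rw [homogeneousComponent_of_mem hp, if_neg he.ne]

attribute [local instance] gradedAlgebra in
theorem homogeneousComponent_mul_of_isHomogeneous_left {p : MvPolynomial ι k} {e n : ℕ}
    (hp : p.IsHomogeneous e) (hen : e ≤ n) (q : MvPolynomial ι k) :
    homogeneousComponent n (p * q) = p * homogeneousComponent (n - e) q := by
  rw [← decomposition.decompose'_apply, ← decomposition.decompose'_apply]
  exact DirectSum.coe_decompose_mul_of_left_mem_of_le (homogeneousSubmodule ι k) hp hen

end MvPolynomial
end

namespace AdicCompletion

variable {R M : Type*} [CommRing R] [AddCommGroup M] [Module R M] {I : Ideal R}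

theorem val_eq_zero_of_le {x : AdicCompletion I M} {m n : ℕ} (hmn : m ≤ n) (hx : x.val n = 0) :
    x.val m = 0 := by
  rw [← x.property hmn, hx, _root_.map_zero]

theorem val_eq_zero_iff_of_val_eq_mk {x : AdicCompletion I M} {m n : ℕ} {p : M} (hmn : m ≤ n)
    (hx : x.val n = Submodule.Quotient.mk p) : x.val m = 0 ↔ p ∈ (I ^ m • ⊤ : Submodule R M) := by
  rw [← x.property hmn, hx, ← Submodule.Quotient.mk_eq_zero]
  rfl

theorem val_mul_eq_zero {x y : AdicCompletion I R} {j l : ℕ} (hx : x.val j = 0)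
    (hy : y.val l = 0) : (x * y).val (j + l) = 0 := by
  obtain ⟨p, hp⟩ := Submodule.Quotient.mk_surjective _ (x.val (j + l))
  obtain ⟨q, hq⟩ := Submodule.Quotient.mk_surjective _ (y.val (j + l))
  have hpq : (x * y).val (j + l) = Submodule.Quotient.mk (p * q) := by
    rw [val_mul, ← hp, ← hq]
    rfl
  rw [val_eq_zero_iff_of_val_eq_mk le_rfl hpq, pow_add, smul_eq_mul, Ideal.mul_top]
  have hp' := (val_eq_zero_iff_of_val_eq_mk (Nat.le_add_right j l) hp.symm).mp hx
  have hq' := (val_eq_zero_iff_of_val_eq_mk (Nat.le_add_left l j) hq.symm).mp hy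
  rw [smul_eq_mul, Ideal.mul_top] at hp' hq'
  exact Ideal.mul_mem_mul hp' hq'

theorem mem_ker_evalₐ_iff {x : AdicCompletion I R} {n : ℕ} :
    x ∈ RingHom.ker (evalₐ I n) ↔ x.val n = 0 := by
  simp only [RingHom.mem_ker, evalₐ, AlgHom.coe_comp, Function.comp_apply, AlgEquiv.coe_toAlgHom,
    EmbeddingLike.map_eq_zero_iff]
  rfl

end AdicCompletion

theorem Nat.exists_seq_of_exists_succ {α : Type*} {P : ℕ → α → Prop} {R : ℕ → α → α → Prop}
    {x₀ : α} (h₀ : P 0 x₀) (step : ∀ n x, P n x → ∃ y, P (n + 1) y ∧ R n x y) :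
    ∃ s : ℕ → α, ∀ n, P n (s n) ∧ R n (s n) (s (n + 1)) := by
  choose next hnext using step
  let s : ∀ n, {x // P n x} :=
    fun n => Nat.rec ⟨x₀, h₀⟩ (fun n x => ⟨next n x.1 x.2, (hnext n x.1 x.2).1⟩) n
  exact ⟨fun n => (s n).1, fun n => ⟨(s n).2, (hnext n _ _).2⟩⟩

namespace PowerSeriesRing

open MvPolynomial AdicCompletion

variable {k ι}

theorem component_eq_of_val_eq_mk {f : PowerSeriesRing k ι} {d n : ℕ} {p : MvPolynomial ι k}
    (hdn : d < n) (hp : f.val n = Submodule.Quotient.mk p) :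
    component k ι d f = homogeneousComponent d p := by
  have hrep : Submodule.Quotient.mk (Quotient.out (f.val (d + 1))) =
      (Submodule.Quotient.mk p : MvPolynomial ι k ⧸ (mxIdeal k ι ^ (d + 1) • ⊤ : Ideal _)) := by
    rw [Submodule.Quotient.mk_out, ← f.property hdn, hp]
    rfl
  have hdiff := Ideal.mul_le_left ((Submodule.Quotient.eq _).mp hrep)
  rw [component, ← sub_eq_zero, ← map_sub]
  exact mem_mxIdeal_pow_iff.mp hdiff d d.lt_succ_self

theorem val_eq_zero_iff {f : PowerSeriesRing k ι} {n : ℕ} :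
    f.val n = 0 ↔ ∀ d < n, component k ι d f = 0 := by
  obtain ⟨p, hp⟩ := Submodule.Quotient.mk_surjective _ (f.val n)
  rw [val_eq_zero_iff_of_val_eq_mk le_rfl hp.symm, smul_eq_mul, Ideal.mul_top,
    mem_mxIdeal_pow_iff]
  exact forall₂_congr fun d hd => by rw [component_eq_of_val_eq_mk hd hp.symm]

@[simps]
noncomputable def componentAddHom (d : ℕ) : PowerSeriesRing k ι →+ MvPolynomial ι k where
  toFun := component k ι d
  map_zero' := val_eq_zero_iff.mp (val_zero_apply _ _ _) d d.lt_succ_self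
  map_add' f g := by
    obtain ⟨p, hp⟩ := Submodule.Quotient.mk_surjective _ (f.val (d + 1))
    obtain ⟨q, hq⟩ := Submodule.Quotient.mk_surjective _ (g.val (d + 1))
    have hpq : (f + g).val (d + 1) = Submodule.Quotient.mk (p + q) := by
      rw [val_add_apply, ← hp, ← hq, Submodule.Quotient.mk_add]
    rw [component_eq_of_val_eq_mk d.lt_succ_self hpq, map_add,
      component_eq_of_val_eq_mk d.lt_succ_self hp.symm,
      component_eq_of_val_eq_mk d.lt_succ_self hq.symm]

theorem component_of_mul {h : MvPolynomial ι k} {e n : ℕ} (hh : h.IsHomogeneous e) (hen : e ≤ n)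
    (f : PowerSeriesRing k ι) :
    component k ι n (AdicCompletion.of (mxIdeal k ι) _ h * f) = h * component k ι (n - e) f := by
  obtain ⟨p, hp⟩ := Submodule.Quotient.mk_surjective _ (f.val (n + 1))
  have hhp : (AdicCompletion.of (mxIdeal k ι) _ h * f).val (n + 1) =
      Submodule.Quotient.mk (h * p) := by
    rw [val_mul, ← hp]
    rfl
  rw [component_eq_of_val_eq_mk n.lt_succ_self hhp,
    homogeneousComponent_mul_of_isHomogeneous_left hh hen,
    component_eq_of_val_eq_mk (by omega) hp.symm]

theorem component_eq_zero_of_lt_ordOf {f : PowerSeriesRing k ι} {d : ℕ} (hd : d < ordOf k ι f) :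
    component k ι d f = 0 := by
  by_contra h
  exact (Nat.sInf_le h).not_gt hd

theorem val_ordOf_eq_zero (f : PowerSeriesRing k ι) : f.val (ordOf k ι f) = 0 :=
  val_eq_zero_iff.mpr fun _ => component_eq_zero_of_lt_ordOf

theorem ordOf_eq_of_val_eq_zero {f : PowerSeriesRing k ι} {n : ℕ} (hf : f.val n = 0)
    (hn : component k ι n f ≠ 0) : ordOf k ι f = n :=
  le_antisymm (Nat.sInf_le hn) (le_csInf ⟨n, hn⟩ fun _ hd => le_of_not_gt fun h =>
    hd (val_eq_zero_iff.mp hf _ h))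

theorem initialForm_isHomogeneous (f : PowerSeriesRing k ι) :
    (initialForm k ι f).IsHomogeneous (ordOf k ι f) :=
  homogeneousComponent_isHomogeneous _ _

theorem component_of_homogeneousComponent_mul (c : MvPolynomial ι k) (f : PowerSeriesRing k ι)
    (n : ℕ) :
    component k ι n
        (AdicCompletion.of (mxIdeal k ι) _ (homogeneousComponent (n - ordOf k ι f) c) * f) =
      homogeneousComponent n (c * initialForm k ι f) := by
  rw [component_of_mul (homogeneousComponent_isHomogeneous _ _) (Nat.sub_le _ _)]
  by_cases hf : ordOf k ι f ≤ n
  · rw [Nat.sub_sub_self hf, mul_comm c,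
      homogeneousComponent_mul_of_isHomogeneous_left (initialForm_isHomogeneous f) hf, mul_comm]
    rfl
  · have hmem : c * initialForm k ι f ∈ mxIdeal k ι ^ ordOf k ι f :=
      Ideal.mul_mem_left _ _ (initialForm_isHomogeneous f).mem_mxIdeal_pow
    rw [component_eq_zero_of_lt_ordOf (by omega), mul_zero,
      mem_mxIdeal_pow_iff.mp hmem n (by omega)]

noncomputable def adicClosure (a : Ideal (PowerSeriesRing k ι)) : Ideal (PowerSeriesRing k ι) :=
  ⨅ n : ℕ, (a ⊔ RingHom.ker (AdicCompletion.evalₐ (mxIdeal k ι) n))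

theorem le_adicClosure (a : Ideal (PowerSeriesRing k ι)) : a ≤ adicClosure a :=
  le_iInf fun _ => le_sup_left

theorem component_mem_initialIdeal {a : Ideal (PowerSeriesRing k ι)} {f : PowerSeriesRing k ι}
    (hf : f ∈ adicClosure a) {n : ℕ} (hfn : f.val n = 0) :
    component k ι n f ∈ initialIdeal k ι a := by
  obtain ⟨y, hya, z, hz, rfl⟩ := Submodule.mem_sup.mp (Submodule.mem_iInf _ |>.mp hf (n + 1))
  rw [mem_ker_evalₐ_iff] at hz
  have hzn : component k ι n z = 0 := val_eq_zero_iff.mp hz n n.lt_succ_self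
  have hyn : y.val n = 0 := by
    simpa [val_eq_zero_of_le n.le_succ hz] using hfn
  have hadd : component k ι n (y + z) = component k ι n y + component k ι n z :=
    map_add (componentAddHom n) y z
  rw [hadd, hzn, add_zero]
  by_cases hy : component k ι n y = 0
  · rw [hy]
    exact zero_mem _
  · refine Ideal.subset_span ⟨y, hya, ?_, ?_⟩
    · rintro rfl
      exact hy (map_zero (componentAddHom n))
    · rw [initialForm, ordOf_eq_of_val_eq_zero hyn hy]

theorem exists_val_succ_eq_zero {a : Ideal (PowerSeriesRing k ι)} {σ : Type*} [Fintype σ]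
    {F : σ → PowerSeriesRing k ι}
    (hspan : initialIdeal k ι a ≤ Ideal.span (Set.range fun g => initialForm k ι (F g)))
    {f : PowerSeriesRing k ι} (hf : f ∈ adicClosure a) {n : ℕ} (hfn : f.val n = 0) :
    ∃ h : σ → MvPolynomial ι k, (∀ g, h g ∈ mxIdeal k ι ^ (n - ordOf k ι (F g))) ∧
      (f - ∑ g, AdicCompletion.of (mxIdeal k ι) _ (h g) * F g).val (n + 1) = 0 := by
  obtain ⟨c, hc⟩ :=
    Ideal.mem_span_range_iff_exists_fun.mp (hspan (component_mem_initialIdeal hf hfn))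
  set h : σ → MvPolynomial ι k := fun g => homogeneousComponent (n - ordOf k ι (F g)) (c g)
  have hh : ∀ g, h g ∈ mxIdeal k ι ^ (n - ordOf k ι (F g)) := fun g =>
    (homogeneousComponent_isHomogeneous _ _).mem_mxIdeal_pow
  have hterm : ∀ g, (AdicCompletion.of (mxIdeal k ι) _ (h g) * F g).val n = 0 := fun g => by
    have hhg : (AdicCompletion.of (mxIdeal k ι) _ (h g)).val (n - ordOf k ι (F g)) = 0 :=
      (val_eq_zero_iff_of_val_eq_mk le_rfl rfl).mpr <| by
        rw [smul_eq_mul, Ideal.mul_top]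
        exact hh g
    exact val_eq_zero_of_le (by omega) (val_mul_eq_zero hhg (val_ordOf_eq_zero (F g)))
  refine ⟨h, hh, val_eq_zero_iff.mpr fun d hd => ?_⟩
  have hcomp : component k ι d (f - ∑ g, AdicCompletion.of (mxIdeal k ι) _ (h g) * F g) =
      component k ι d f - ∑ g, component k ι d (AdicCompletion.of (mxIdeal k ι) _ (h g) * F g) := by
    simp only [← componentAddHom_apply, map_sub, map_sum]
  rw [hcomp]
  rcases Nat.lt_succ_iff_lt_or_eq.mp hd with hd | rfl
  · simp only [val_eq_zero_iff.mp hfn d hd, fun g => val_eq_zero_iff.mp (hterm g) d hd,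
      Finset.sum_const_zero, sub_zero]
  · simp only [h, component_of_homogeneousComponent_mul, ← map_sum, hc, sub_eq_zero]
    exact (homogeneousComponent_eq_self (homogeneousComponent_isHomogeneous _ _)).symm

theorem mem_span_of_approx {σ : Type*} [Fintype σ] {F : σ → PowerSeriesRing k ι}
    {f : PowerSeriesRing k ι} (q : ℕ → σ → MvPolynomial ι k)
    (happrox : ∀ n, (f - ∑ g, AdicCompletion.of (mxIdeal k ι) _ (q n g) * F g).val n = 0)
    (hcauchy : ∀ n g, q (n + 1) g - q n g ∈ mxIdeal k ι ^ (n - ordOf k ι (F g))) :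
    f ∈ Ideal.span (Set.range F) := by
  -- the coefficient of `F g` is only determined to precision `n - ordOf (F g)` at stage `n`
  let Q (g : σ) : PowerSeriesRing k ι :=
    AdicCompletion.mk _ _ <| AdicCauchySequence.mk _ _ (fun n => q (n + ordOf k ι (F g)) g)
      fun n => by
        rw [SModEq.sub_mem, smul_eq_mul, Ideal.mul_top, ← neg_mem_iff, neg_sub,
          show n + 1 + ordOf k ι (F g) = n + ordOf k ι (F g) + 1 by omega]
        simpa using hcauchy (n + ordOf k ι (F g)) g
  suffices f = ∑ g, Q g * F g by
    rw [this]
    exact Ideal.sum_mem _ fun g _ => Ideal.mul_mem_left _ _ (Ideal.subset_span ⟨g, rfl⟩)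
  refine sub_eq_zero.mp (AdicCompletion.ext fun n => ?_)
  have hQ : ∀ g, (Q g - AdicCompletion.of (mxIdeal k ι) _ (q n g)).val
      (n - ordOf k ι (F g)) = 0 := by
    intro g
    rcases le_or_gt (ordOf k ι (F g)) n with hle | hlt
    · rw [val_sub_apply, sub_eq_zero]
      change Submodule.Quotient.mk (q (n - ordOf k ι (F g) + ordOf k ι (F g)) g) = _
      rw [Nat.sub_add_cancel hle]
      rfl
    · rw [Nat.sub_eq_zero_of_le hlt.le]
      exact val_eq_zero_iff.mpr nofun
  have hsplit : f - ∑ g, Q g * F g =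
      (f - ∑ g, AdicCompletion.of (mxIdeal k ι) _ (q n g) * F g) -
        ∑ g, (Q g - AdicCompletion.of (mxIdeal k ι) _ (q n g)) * F g := by
    simp only [sub_mul, Finset.sum_sub_distrib, sub_sub_sub_cancel_right]
  rw [hsplit, val_sub_apply, happrox n, val_sum_apply, val_zero_apply, zero_sub, neg_eq_zero]
  exact Finset.sum_eq_zero fun g _ =>
    val_eq_zero_of_le (by omega) (val_mul_eq_zero (hQ g) (val_ordOf_eq_zero (F g)))

theorem adicClosure_le_span {a : Ideal (PowerSeriesRing k ι)} {σ : Type*} [Fintype σ]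
    {F : σ → PowerSeriesRing k ι} (hFa : ∀ g, F g ∈ a)
    (hspan : initialIdeal k ι a ≤ Ideal.span (Set.range fun g => initialForm k ι (F g))) :
    adicClosure a ≤ Ideal.span (Set.range F) := by
  intro f hf
  let approx (q : σ → MvPolynomial ι k) : PowerSeriesRing k ι :=
    ∑ g, AdicCompletion.of (mxIdeal k ι) _ (q g) * F g
  obtain ⟨q, hq⟩ := Nat.exists_seq_of_exists_succ
    (P := fun n q => (f - approx q).val n = 0)
    (R := fun n q q' => ∀ g, q' g - q g ∈ mxIdeal k ι ^ (n - ordOf k ι (F g)))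
    (x₀ := 0) (val_eq_zero_iff.mpr nofun) fun n q hq => by
      have hfq : f - approx q ∈ adicClosure a := sub_mem hf <| le_adicClosure a <|
        Ideal.sum_mem _ fun g _ => Ideal.mul_mem_left _ _ (hFa g)
      obtain ⟨h, hh, hval⟩ := exists_val_succ_eq_zero hspan hfq hq
      refine ⟨q + h, ?_, fun g => by simpa using hh g⟩
      simpa [approx, add_mul, Finset.sum_add_distrib, sub_sub] using hval
  exact mem_span_of_approx q (fun n => (hq n).1) (fun n => (hq n).2)

end PowerSeriesRing

/-- Let `P̂ = S[[xᵢ : i ∈ I]]` be the power series ring over a ring `S`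
(the completion of `S[xᵢ : i ∈ I]` at `(xᵢ)`).  If `a ⊆ P̂` is an ideal whose initial
ideal `in(a) ⊆ S[xᵢ : i ∈ I]` is finitely generated, then `a` is finitely generated and
closed in `P̂`, i.e. equal to its topological closure `⋂ₙ (a + ker(P̂ → S[xᵢ]/(xᵢ)ⁿ))`. -/
theorem fg_and_closed_of_initialIdeal_fg
    (S : Type*) [CommRing S] (I : Type*) (a : Ideal (PowerSeriesRing S I))
    (hfg : (initialIdeal S I a).FG) :
    a.FG ∧ a = ⨅ n : ℕ, (a ⊔ RingHom.ker (AdicCompletion.evalₐ (mxIdeal S I) n)) := by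
  obtain ⟨s, hs, hspan_s⟩ := (Submodule.fg_span_iff_fg_span_finset_subset _).mp hfg
  choose F hFa _ hFs using fun g : s => hs g.2
  have hspan : initialIdeal S I a ≤ Ideal.span (Set.range fun g => initialForm S I (F g)) := by
    rw [initialIdeal, Ideal.span, hspan_s, ← Ideal.span, Ideal.span_le]
    exact fun g hg => Ideal.subset_span ⟨⟨g, hg⟩, (hFs ⟨g, hg⟩).symm⟩
  have hle : Ideal.span (Set.range F) ≤ a := Ideal.span_le.mpr (Set.range_subset_iff.mpr hFa)
  have hclosure := PowerSeriesRing.adicClosure_le_span hFa hspan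
  have ha := PowerSeriesRing.le_adicClosure a
  refine ⟨?_, le_antisymm ha (hclosure.trans hle)⟩
  rw [le_antisymm (ha.trans hclosure) hle]
  exact Submodule.fg_span (Set.finite_range F)
end
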